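/- Let n ≥ 3, 1 ≤ k ≤ n, 0 < γ < k, l ≤ k−1, and let b be a positive continuous function on [0, ∞) with b(r) = r^{−l} for all r ≥ R₀, for some R₀ > 0. Let u be a positive nondecreasing solution on [0, ∞) of C_{n−1}^{k−1} u''(u'/r)^{k−1} + C_{n−1}^k (u'/r)^k = b(r) u^γ with u'(0) = 0 and u(r) → ∞ as r → ∞. Then, with α = (2k−l)/(k−γ), there exist constants 0 < C₁ ≤ C₂ and R > 0 such that C₁ r^{α} ≤ u(r) ≤ C₂ r^{α} for all r ≥ R. -/

import Mathlib

open MeasureTheory Real Filter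

noncomputable section



private lemma root_helper (k : ℕ) (hk : k ≠ 0) {x y : ℝ} (hx : 0 ≤ x) (h : x ^ k ≤ y) :
    x ≤ y ^ ((k:ℝ)⁻¹) := by
  calc x = (x ^ k) ^ ((k:ℝ)⁻¹) := (Real.pow_rpow_inv_natCast hx hk).symm
    _ ≤ y ^ ((k:ℝ)⁻¹) := Real.rpow_le_rpow (pow_nonneg hx k) h (by positivity)

private lemma iter_helper (φ : ℝ → ℝ) (R c₀ θ m₀ : ℝ) (hR : 0 < R) (hc₀ : 0 < c₀)
    (hθ0 : 0 < θ) (hθ1 : θ < 1) (hm₀ : 0 < m₀)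
    (hbase : ∀ r, R ≤ r → r ≤ 4*R → m₀ ≤ φ r)
    (hrec : ∀ r, 4*R ≤ r → c₀ * φ (r/4) ^ θ ≤ φ r) :
    ∃ Kc : ℝ, 0 < Kc ∧ ∀ r, R ≤ r → Kc ≤ φ r := by
  set Kc := min (min (c₀ ^ (1/(1-θ))) m₀) 1 with hKc_def
  have hKpos : 0 < Kc := by
    apply lt_min (lt_min _ hm₀) one_pos
    positivity
  have hKc₀ : Kc ≤ c₀ ^ (1/(1-θ)) := le_trans (min_le_left _ _) (min_le_left _ _)
  have hKm : Kc ≤ m₀ := le_trans (min_le_left _ _) (min_le_right _ _)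
  have h1θ : 0 < 1 - θ := by linarith
  have key : Kc ≤ c₀ * Kc ^ θ := by
    have h1 : Kc ^ (1-θ) ≤ c₀ := by
      calc Kc ^ (1-θ) ≤ (c₀ ^ (1/(1-θ))) ^ (1-θ) :=
            Real.rpow_le_rpow hKpos.le hKc₀ h1θ.le
        _ = c₀ := by
            rw [← Real.rpow_mul hc₀.le, one_div, inv_mul_cancel₀ h1θ.ne', Real.rpow_one]
    calc Kc = Kc ^ (1-θ) * Kc ^ θ := by
          rw [← Real.rpow_add hKpos, sub_add_cancel, Real.rpow_one]
      _ ≤ c₀ * Kc ^ θ := mul_le_mul_of_nonneg_right h1 (Real.rpow_nonneg hKpos.le θ)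
  have main : ∀ m : ℕ, ∀ r, R ≤ r → r ≤ 4^(m+1)*R → Kc ≤ φ r := by
    intro m
    induction m with
    | zero =>
      intro r h1 h2
      exact le_trans hKm (hbase r h1 (by rw [pow_one] at h2; exact h2))
    | succ m ih =>
      intro r h1 h2
      by_cases hcase : r ≤ 4^(m+1)*R
      · exact ih r h1 hcase
      · push_neg at hcase
        have h4 : (4:ℝ) ≤ 4^(m+1) := by
          calc (4:ℝ) = 4^1 := (pow_one 4).symm
            _ ≤ 4^(m+1) := pow_le_pow_right₀ (by norm_num) (by omega)
        have h4R : 4*R ≤ r := le_of_lt (lt_of_le_of_lt (by nlinarith) hcase)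
        have hq : R ≤ r/4 := by linarith
        have hq2 : r/4 ≤ 4^(m+1)*R := by
          rw [pow_succ] at h2; linarith
        have hih := ih (r/4) hq hq2
        calc Kc ≤ c₀ * Kc ^ θ := key
          _ ≤ c₀ * φ (r/4) ^ θ :=
              mul_le_mul_of_nonneg_left (Real.rpow_le_rpow hKpos.le hih hθ0.le) hc₀.le
          _ ≤ φ r := hrec r h4R
  refine ⟨Kc, hKpos, fun r hr => ?_⟩
  obtain ⟨m, hm⟩ := pow_unbounded_of_one_lt (r/R) (by norm_num : (1:ℝ) < 4)
  refine main m r hr ?_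
  have : r/R < 4^m := hm
  have h1 : r < 4^m * R := by
    rw [div_lt_iff₀ hR] at this; linarith
  have : (4:ℝ)^m ≤ 4^(m+1) := pow_le_pow_right₀ (by norm_num) (by omega)
  nlinarith

private lemma root_helper2 (k : ℕ) (hk : k ≠ 0) {x y : ℝ} (hx : 0 ≤ x) (hy : 0 ≤ y)
    (h : y ≤ x ^ k) : y ^ ((k:ℝ)⁻¹) ≤ x := by
  calc y ^ ((k:ℝ)⁻¹) ≤ (x ^ k) ^ ((k:ℝ)⁻¹) := Real.rpow_le_rpow hy h (by positivity)
    _ = x := Real.pow_rpow_inv_natCast hx hk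



set_option maxHeartbeats 1000000 in
/-- **Lemma 4.1.** If `b(r) = r^{-l}` for `r ≥ R₀` with `l ≤ k-1`, then any positive
nondecreasing entire large solution of the radial equation satisfies
`u(r) ∼ r^{(2k-l)/(k-γ)}` as `r → ∞`. -/
theorem radial_large_solution_asymptotics_exact_weight
    (n k : ℕ) (hn : 3 ≤ n) (hk1 : 1 ≤ k) (hkn : k ≤ n)
    (γ : ℝ) (hγ0 : 0 < γ) (hγk : γ < k)
    (l : ℝ) (hl : l ≤ (k : ℝ) - 1)
    (b : ℝ → ℝ) (hb_cont : ContinuousOn b (Set.Ici 0)) (hb_pos : ∀ r : ℝ, 0 ≤ r → 0 < b r)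
    (R₀ : ℝ) (hR₀ : 0 < R₀) (hb_eq : ∀ r : ℝ, R₀ ≤ r → b r = r ^ (-l))
    (u : ℝ → ℝ)
    (hu_pos : ∀ r : ℝ, 0 ≤ r → 0 < u r)
    (hu_mono : MonotoneOn u (Set.Ici 0))
    (hu_cont : ContinuousOn u (Set.Ici 0))
    (hu_cont' : ContinuousOn (deriv u) (Set.Ici 0))
    (hu_diff : ∀ r : ℝ, 0 < r → DifferentiableAt ℝ u r ∧ DifferentiableAt ℝ (deriv u) r)
    (hu'_0 : deriv u 0 = 0)
    (hu_ode : ∀ r : ℝ, 0 < r →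
      ((n - 1).choose (k - 1) : ℝ) * deriv (deriv u) r * (deriv u r / r) ^ (k - 1) +
        ((n - 1).choose k : ℝ) * (deriv u r / r) ^ k = b r * u r ^ γ)
    (hu_blowup : Tendsto u atTop atTop) :
    ∃ C₁ C₂ R : ℝ, 0 < C₁ ∧ C₁ ≤ C₂ ∧ 0 < R ∧
      ∀ r : ℝ, R ≤ r →
        C₁ * r ^ ((2 * k - l) / ((k : ℝ) - γ)) ≤ u r ∧
        u r ≤ C₂ * r ^ ((2 * k - l) / ((k : ℝ) - γ)) := by
  obtain ⟨k', rfl⟩ : ∃ k', k = k' + 1 := ⟨k - 1, (Nat.succ_pred_eq_of_pos hk1).symm⟩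
  -- notation
  set v : ℝ → ℝ := deriv u with hv_def
  set C : ℝ := ((n-1).choose k' : ℝ) with hC_def
  set D : ℝ := ((n-1).choose (k'+1) : ℝ) with hD_def
  set K : ℝ := (k' : ℝ) + 1 with hK_def
  have hKcast : ((k'+1 : ℕ) : ℝ) = K := by push_cast [hK_def]; ring
  have hK1 : 1 ≤ K := by rw [hK_def]; linarith [Nat.cast_nonneg (α:=ℝ) k']
  have hKpos : 0 < K := by linarith
  have hγK : γ < K := by rw [hK_def]; push_cast at hγk ⊢; linarith
  have hlK : l ≤ K - 1 := by rw [hK_def]; push_cast at hl ⊢; linarith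
  have hC : 0 < C := by
    rw [hC_def]
    exact_mod_cast Nat.cast_pos.mpr (Nat.choose_pos (by omega : k' ≤ n - 1))
  have hD0 : 0 ≤ D := by positivity
  have hkD : K * D = ((n:ℝ) - K) * C := by
    have h := Nat.choose_succ_right_eq (n-1) k'
    have h3 : n - 1 - k' = n - (k'+1) := by omega
    rw [h3] at h
    have h4 := congrArg (fun m : ℕ => (m : ℝ)) h
    push_cast [Nat.cast_sub hkn] at h4
    rw [hK_def, hC_def, hD_def]
    push_cast
    linarith
  have hNK : (k' + 1 : ℕ) ≤ n := hkn
  have hNKr : K ≤ (n:ℝ) := by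
    rw [← hKcast]; exact_mod_cast hNK
  -- nonnegativity of the derivative
  have hv_nonneg : ∀ r : ℝ, 0 < r → 0 ≤ v r := by
    intro r hr
    have hd : HasDerivAt u (v r) r := (hu_diff r hr).1.hasDerivAt
    have ht : Tendsto (slope u r) (nhdsWithin r (Set.Ioi r)) (nhds (v r)) :=
      (hasDerivAt_iff_tendsto_slope.mp hd).mono_left
        (nhdsWithin_mono r (fun x hx => Set.mem_compl_singleton_iff.mpr (ne_of_gt hx)))
    refine ge_of_tendsto ht ?_
    filter_upwards [self_mem_nhdsWithin] with x hx
    have hx' : r < x := hx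
    have hmon : u r ≤ u x := hu_mono (Set.mem_Ici.mpr hr.le)
      (Set.mem_Ici.mpr (hr.trans hx').le) hx'.le
    rw [slope_def_field]
    have : (0:ℝ) < x - r := by linarith
    exact div_nonneg (by linarith) this.le
  -- energy function and its derivative
  set E : ℝ → ℝ := fun r => r ^ ((n:ℝ) - K) * v r ^ (k'+1) with hE_def
  set g : ℝ → ℝ := fun s => (K / C) * (s ^ ((n:ℝ)-1) * (b s * u s ^ γ)) with hg_def
  have hE' : ∀ r : ℝ, 0 < r → HasDerivAt E (g r) r := by
    intro r hr
    have hd1 : HasDerivAt (fun y : ℝ => y ^ ((n:ℝ) - K)) (((n:ℝ)-K) * r ^ ((n:ℝ)-K-1)) r :=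
      Real.hasDerivAt_rpow_const (Or.inl hr.ne')
    have hd2 : HasDerivAt (fun y => v y ^ (k'+1))
        ((((k'+1:ℕ):ℝ) * v r ^ (k'+1-1)) * deriv v r) r :=
      (hu_diff r hr).2.hasDerivAt.pow (k'+1)
    simp only [Nat.add_sub_cancel] at hd2
    have hprod := hd1.mul hd2
    have hode := hu_ode r hr
    simp only [Nat.add_sub_cancel] at hode
    rw [← hC_def] at hode
    have halg : g r = ((n:ℝ)-K) * r ^ ((n:ℝ)-K-1) * v r ^ (k'+1)
        + r ^ ((n:ℝ)-K) * ((((k'+1:ℕ):ℝ) * v r ^ k') * deriv v r) := by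
      rw [hg_def]
      simp only
      rw [← hode, hK_def]
      push_cast
      set w := deriv v r
      set vr := v r
      have e1 : r^((n:ℝ)-1) = r^n / r := by
        rw [Real.rpow_sub hr, Real.rpow_one, Real.rpow_natCast]
      have e2 : r^((n:ℝ)-((k':ℝ)+1)) = r^n / r^(k'+1) := by
        rw [show (n:ℝ)-((k':ℝ)+1) = (n:ℝ) - ((k'+1:ℕ):ℝ) by push_cast; ring,
          Real.rpow_sub hr, Real.rpow_natCast, Real.rpow_natCast]
      have e3 : r^((n:ℝ)-((k':ℝ)+1)-1) = r^n / (r^(k'+1)*r) := by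
        rw [show (n:ℝ)-((k':ℝ)+1) = (n:ℝ) - ((k'+1:ℕ):ℝ) by push_cast; ring,
          Real.rpow_sub hr, Real.rpow_sub hr, Real.rpow_one, div_div,
          Real.rpow_natCast, Real.rpow_natCast]
      rw [e1, e2, e3]
      have hrk : r^(k'+1) ≠ 0 := pow_ne_zero _ hr.ne'
      have hkD' : ((k':ℝ)+1) * D = ((n:ℝ) - ((k':ℝ)+1)) * C := by
        rw [hK_def] at hkD; exact hkD
      field_simp
      have ha : (vr/r)^k' * r^(k'+1) = vr^k' * r := by
        rw [div_pow, pow_succ, ← mul_assoc, div_mul_cancel₀ _ (pow_ne_zero _ hr.ne')]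
      have hb : (vr/r)^(k'+1) * r^(k'+1) = vr^(k'+1) := by
        rw [div_pow, div_mul_cancel₀ _ (pow_ne_zero _ hr.ne')]
      linear_combination ((k':ℝ)+1)*C*w*ha + ((k':ℝ)+1)*D*hb + vr^(k'+1) * hkD'
    rw [hE_def, halg]
    exact hprod
  have hE_nonneg : ∀ r : ℝ, 0 < r → 0 ≤ E r := by
    intro r hr
    have := hv_nonneg r hr
    positivity
  have hu_contOn : ∀ a c : ℝ, 0 < a → ContinuousOn u (Set.Icc a c) :=
    fun a c ha => hu_cont.mono (fun x hx => le_trans ha.le hx.1)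
  have hg_contOn : ∀ a c : ℝ, 0 < a → ContinuousOn g (Set.Icc a c) := by
    intro a c ha
    have hpos : ∀ x ∈ Set.Icc a c, 0 < x := fun x hx => lt_of_lt_of_le ha hx.1
    have h1 : ContinuousOn (fun s : ℝ => s ^ ((n:ℝ)-1)) (Set.Icc a c) :=
      fun x hx => (Real.continuousAt_rpow_const x _ (Or.inl (hpos x hx).ne')).continuousWithinAt
    have h2 : ContinuousOn b (Set.Icc a c) := hb_cont.mono (fun x hx => (hpos x hx).le)
    have h3 : ContinuousOn (fun s => u s ^ γ) (Set.Icc a c) :=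
      (hu_contOn a c ha).rpow_const (fun x hx => Or.inr hγ0.le)
    exact continuousOn_const.mul (h1.mul (h2.mul h3))
  have hg_int : ∀ a c : ℝ, 0 < a → a ≤ c → IntervalIntegrable g volume a c := by
    intro a c ha hac
    apply ContinuousOn.intervalIntegrable
    rw [Set.uIcc_of_le hac]
    exact hg_contOn a c ha
  have hE_ftc : ∀ a c : ℝ, 0 < a → a ≤ c → E c - E a = ∫ s in a..c, g s := by
    intro a c ha hac
    refine (intervalIntegral.integral_eq_sub_of_hasDerivAt ?_ (hg_int a c ha hac)).symm
    intro x hx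
    rw [Set.uIcc_of_le hac] at hx
    exact hE' x (lt_of_lt_of_le ha hx.1)
  set r₁ : ℝ := max R₀ 1 with hr₁_def
  have hr₁0 : 0 < r₁ := lt_of_lt_of_le one_pos (le_max_right _ _)
  have hr₁R₀ : R₀ ≤ r₁ := le_max_left _ _
  have hr₁1 : (1:ℝ) ≤ r₁ := le_max_right _ _
  -- upper bound on E
  have hNl : (0:ℝ) ≤ (n:ℝ) - 1 - l := by linarith [hNKr]
  have hE_upper : ∀ r : ℝ, r₁ ≤ r → E r ≤ E r₁ + (K/C) * (u r ^ γ * r ^ ((n:ℝ) - l)) := by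
    intro r hrr
    have hr0 : 0 < r := lt_of_lt_of_le hr₁0 hrr
    have hftc := hE_ftc r₁ r hr₁0 hrr
    have hmono : ∫ s in r₁..r, g s ≤ ∫ s in r₁..r, (K/C) * (r ^ ((n:ℝ)-1-l) * u r ^ γ) := by
      apply intervalIntegral.integral_mono_on hrr (hg_int r₁ r hr₁0 hrr) intervalIntegrable_const
      intro s hs
      have hs0 : 0 < s := lt_of_lt_of_le hr₁0 hs.1
      have hbs : b s = s ^ (-l) := hb_eq s (le_trans hr₁R₀ hs.1)
      rw [hg_def]
      simp only
      rw [hbs]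
      have e : s ^ ((n:ℝ)-1) * (s ^ (-l) * u s ^ γ) = s ^ ((n:ℝ)-1-l) * u s ^ γ := by
        rw [← mul_assoc, ← Real.rpow_add hs0]
        ring_nf
      rw [e]
      have h1 : s ^ ((n:ℝ)-1-l) ≤ r ^ ((n:ℝ)-1-l) := Real.rpow_le_rpow hs0.le hs.2 hNl
      have h2 : u s ^ γ ≤ u r ^ γ :=
        Real.rpow_le_rpow (hu_pos s hs0.le).le
          (hu_mono (Set.mem_Ici.mpr hs0.le) (Set.mem_Ici.mpr hr0.le) hs.2) hγ0.le
      have hKC : (0:ℝ) ≤ K/C := by positivity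
      exact mul_le_mul_of_nonneg_left
        (mul_le_mul h1 h2 (Real.rpow_nonneg (hu_pos s hs0.le).le γ)
          (Real.rpow_nonneg hr0.le _)) hKC
    rw [intervalIntegral.integral_const, smul_eq_mul] at hmono
    have h3 : r ^ ((n:ℝ)-l) = r ^ ((n:ℝ)-1-l) * r := by
      rw [show (n:ℝ)-l = ((n:ℝ)-1-l) + 1 by ring, Real.rpow_add hr0, Real.rpow_one]
    have h4 : (r - r₁) * ((K/C) * (r ^ ((n:ℝ)-1-l) * u r ^ γ)) ≤ (K/C) * (u r ^ γ * r ^ ((n:ℝ)-l)) := by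
      rw [h3]
      have h5 : r - r₁ ≤ r := by linarith
      have h6 : (0:ℝ) ≤ (K/C) * (r ^ ((n:ℝ)-1-l) * u r ^ γ) := by
        have := (hu_pos r hr0.le).le
        positivity
      calc (r - r₁) * ((K/C) * (r ^ ((n:ℝ)-1-l) * u r ^ γ))
          ≤ r * ((K/C) * (r ^ ((n:ℝ)-1-l) * u r ^ γ)) := mul_le_mul_of_nonneg_right h5 h6
        _ = (K/C) * (u r ^ γ * (r ^ ((n:ℝ)-1-l) * r)) := by ring
    linarith
  -- lower bound on E
  have hE_lower : ∀ r : ℝ, 2*r₁ ≤ r →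
      (K/C) * ((2:ℝ)⁻¹ ^ ((n:ℝ) - l) * (u (r/2) ^ γ * r ^ ((n:ℝ) - l))) ≤ E r := by
    intro r hrr
    have hr20 : 0 < r/2 := by linarith
    have hr2r₁ : r₁ ≤ r/2 := by linarith
    have hr0 : 0 < r := by linarith
    have hftc := hE_ftc (r/2) r hr20 (by linarith)
    have hE2 := hE_nonneg (r/2) hr20
    have hmono : ∫ s in (r/2)..r, (K/C) * ((r/2) ^ ((n:ℝ)-1-l) * u (r/2) ^ γ)
        ≤ ∫ s in (r/2)..r, g s := by
      apply intervalIntegral.integral_mono_on (by linarith) intervalIntegrable_const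
        (hg_int (r/2) r hr20 (by linarith))
      intro s hs
      have hs0 : 0 < s := lt_of_lt_of_le hr20 hs.1
      have hbs : b s = s ^ (-l) := hb_eq s (le_trans hr₁R₀ (le_trans hr2r₁ hs.1))
      rw [hg_def]
      simp only
      rw [hbs]
      have e : s ^ ((n:ℝ)-1) * (s ^ (-l) * u s ^ γ) = s ^ ((n:ℝ)-1-l) * u s ^ γ := by
        rw [← mul_assoc, ← Real.rpow_add hs0]
        ring_nf
      rw [e]
      have h1 : (r/2) ^ ((n:ℝ)-1-l) ≤ s ^ ((n:ℝ)-1-l) := Real.rpow_le_rpow hr20.le hs.1 hNl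
      have h2 : u (r/2) ^ γ ≤ u s ^ γ :=
        Real.rpow_le_rpow (hu_pos (r/2) hr20.le).le
          (hu_mono (Set.mem_Ici.mpr hr20.le) (Set.mem_Ici.mpr hs0.le) hs.1) hγ0.le
      have hKC : (0:ℝ) ≤ K/C := by positivity
      exact mul_le_mul_of_nonneg_left
        (mul_le_mul h1 h2 (Real.rpow_nonneg (hu_pos (r/2) hr20.le).le γ)
          (Real.rpow_nonneg hs0.le _)) hKC
    rw [intervalIntegral.integral_const, smul_eq_mul] at hmono
    have h4 : (r/2) ^ ((n:ℝ)-l) = (2:ℝ)⁻¹ ^ ((n:ℝ)-l) * r ^ ((n:ℝ)-l) := by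
      rw [show r/2 = 2⁻¹ * r by ring, Real.mul_rpow (by norm_num) hr0.le]
    have h5 : (r/2) ^ ((n:ℝ)-l) = (r/2) ^ ((n:ℝ)-1-l) * (r/2) := by
      rw [show (n:ℝ)-l = ((n:ℝ)-1-l) + 1 by ring, Real.rpow_add hr20, Real.rpow_one]
    have h6 : (r - r/2) * ((K/C) * ((r/2) ^ ((n:ℝ)-1-l) * u (r/2) ^ γ))
        = (K/C) * ((2:ℝ)⁻¹ ^ ((n:ℝ)-l) * (u (r/2) ^ γ * r ^ ((n:ℝ)-l))) := by
      have h7 : r - r/2 = r/2 := by ring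
      rw [h7]
      have h8 : (r/2) * ((r/2) ^ ((n:ℝ)-1-l)) = (2:ℝ)⁻¹ ^ ((n:ℝ)-l) * r ^ ((n:ℝ)-l) := by
        rw [← h4, h5]; ring
      calc (r/2) * ((K/C) * ((r/2) ^ ((n:ℝ)-1-l) * u (r/2) ^ γ))
          = (K/C) * ((r/2 * (r/2) ^ ((n:ℝ)-1-l)) * u (r/2) ^ γ) := by ring
        _ = (K/C) * ((2:ℝ)⁻¹ ^ ((n:ℝ)-l) * (u (r/2) ^ γ * r ^ ((n:ℝ)-l))) := by rw [h8]; ring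
    linarith
  -- upper bound on v
  obtain ⟨A, hA, R₂, hR₂r₁, hR₂1, hv_upper⟩ :
      ∃ A : ℝ, 0 < A ∧ ∃ R₂ : ℝ, r₁ ≤ R₂ ∧ 1 ≤ R₂ ∧
        ∀ r : ℝ, R₂ ≤ r → v r ≤ A * (r ^ ((K - l)/K) * u r ^ (γ/K)) := by
    set S : ℝ := E r₁ * (C/K) with hS_def
    obtain ⟨M, hM⟩ := eventually_atTop.mp (hu_blowup.eventually_ge_atTop ((max S 0) ^ (γ⁻¹:ℝ)))
    refine ⟨(2*(K/C)) ^ (K⁻¹ : ℝ), by positivity, max (max r₁ 1) M,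
      le_trans (le_max_left r₁ 1) (le_max_left _ _),
      le_trans (le_max_right r₁ 1) (le_max_left _ _), ?_⟩
    intro r hr
    have hrr₁ : r₁ ≤ r := le_trans (le_trans (le_max_left r₁ 1) (le_max_left _ _)) hr
    have hr1 : (1:ℝ) ≤ r := le_trans (le_trans (le_max_right r₁ 1) (le_max_left _ _)) hr
    have hrM : M ≤ r := le_trans (le_max_right _ _) hr
    have hr0 : 0 < r := lt_of_lt_of_le one_pos hr1
    have hu0 : 0 < u r := hu_pos r hr0.le
    have hSu : S ≤ u r ^ γ := by
      have h2 : ((max S 0) ^ (γ⁻¹:ℝ)) ^ γ ≤ u r ^ γ :=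
        Real.rpow_le_rpow (Real.rpow_nonneg (le_max_right S 0) _) (hM r hrM) hγ0.le
      rw [← Real.rpow_mul (le_max_right S 0), inv_mul_cancel₀ hγ0.ne', Real.rpow_one] at h2
      exact le_trans (le_max_left S 0) h2
    have hEr1 : E r₁ ≤ (K/C) * (u r ^ γ * r ^ ((n:ℝ)-l)) := by
      have hCK : (C/K) * (K/C) = 1 := by
        field_simp
      have hE1 : E r₁ = S * (K/C) := by
        rw [hS_def, mul_assoc, hCK, mul_one]
      have hrNl : (1:ℝ) ≤ r ^ ((n:ℝ)-l) := Real.one_le_rpow hr1 (by linarith)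
      have hugam : (0:ℝ) ≤ u r ^ γ := Real.rpow_nonneg hu0.le γ
      have : S ≤ u r ^ γ * r ^ ((n:ℝ)-l) := by nlinarith
      rw [hE1]
      have hKC : (0:ℝ) ≤ K/C := by positivity
      calc S * (K/C) ≤ (u r ^ γ * r ^ ((n:ℝ)-l)) * (K/C) := mul_le_mul_of_nonneg_right this hKC
        _ = (K/C) * (u r ^ γ * r ^ ((n:ℝ)-l)) := by ring
    have hEbound : E r ≤ 2*(K/C) * (u r ^ γ * r ^ ((n:ℝ)-l)) := by
      have := hE_upper r hrr₁
      linarith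
    have hsplit : r ^ ((n:ℝ)-l) = r ^ ((n:ℝ)-K) * r ^ (K-l) := by
      rw [← Real.rpow_add hr0]; ring_nf
    have hrNK : 0 < r ^ ((n:ℝ)-K) := Real.rpow_pos_of_pos hr0 _
    have hstep : v r ^ (k'+1) ≤ 2*(K/C) * (u r ^ γ * r ^ (K-l)) := by
      have h1 : r ^ ((n:ℝ)-K) * v r ^ (k'+1)
          ≤ r ^ ((n:ℝ)-K) * (2*(K/C) * (u r ^ γ * r ^ (K-l))) := by
        have he : E r = r ^ ((n:ℝ)-K) * v r ^ (k'+1) := by rw [hE_def]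
        have he2 : 2*(K/C) * (u r ^ γ * r ^ ((n:ℝ)-l))
            = r ^ ((n:ℝ)-K) * (2*(K/C) * (u r ^ γ * r ^ (K-l))) := by
          rw [hsplit]; ring
        rw [← he, ← he2]
        exact hEbound
      exact (mul_le_mul_iff_right₀ hrNK).mp h1
    have hroot := root_helper (k'+1) (Nat.succ_ne_zero k') (hv_nonneg r hr0) hstep
    rw [hKcast] at hroot
    have hexp : (2*(K/C) * (u r ^ γ * r ^ (K-l))) ^ (K⁻¹:ℝ)
        = (2*(K/C)) ^ (K⁻¹:ℝ) * (r ^ ((K-l)/K) * u r ^ (γ/K)) := by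
      rw [Real.mul_rpow (by positivity) (by positivity),
        Real.mul_rpow (Real.rpow_nonneg hu0.le γ) (Real.rpow_nonneg hr0.le _),
        ← Real.rpow_mul hu0.le, ← Real.rpow_mul hr0.le,
        show γ * K⁻¹ = γ/K from (div_eq_mul_inv γ K).symm,
        show (K-l) * K⁻¹ = (K-l)/K from (div_eq_mul_inv _ K).symm]
      ring
    rw [hexp] at hroot
    exact hroot
  -- lower bound on v
  obtain ⟨A₂, hA₂, hv_lower⟩ :
      ∃ A₂ : ℝ, 0 < A₂ ∧ ∀ r : ℝ, 2*r₁ ≤ r →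
        A₂ * ((r ^ ((K - l)/K)) * u (r/2) ^ (γ/K)) ≤ v r := by
    refine ⟨((K/C) * (2:ℝ)⁻¹ ^ ((n:ℝ)-l)) ^ (K⁻¹:ℝ), by positivity, ?_⟩
    intro r hrr
    have hr0 : 0 < r := by linarith
    have hr20 : 0 < r/2 := by linarith
    have hu20 : 0 < u (r/2) := hu_pos (r/2) hr20.le
    have hEl := hE_lower r hrr
    have hrNK : 0 < r ^ ((n:ℝ)-K) := Real.rpow_pos_of_pos hr0 _
    have hsplit : r ^ ((n:ℝ)-l) = r ^ ((n:ℝ)-K) * r ^ (K-l) := by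
      rw [← Real.rpow_add hr0]; ring_nf
    have hstep : (K/C) * (2:ℝ)⁻¹ ^ ((n:ℝ)-l) * (u (r/2) ^ γ * r ^ (K-l)) ≤ v r ^ (k'+1) := by
      have h1 : r ^ ((n:ℝ)-K) * ((K/C) * (2:ℝ)⁻¹ ^ ((n:ℝ)-l) * (u (r/2) ^ γ * r ^ (K-l)))
          ≤ r ^ ((n:ℝ)-K) * v r ^ (k'+1) := by
        have he : E r = r ^ ((n:ℝ)-K) * v r ^ (k'+1) := by rw [hE_def]
        have he2 : (K/C) * ((2:ℝ)⁻¹ ^ ((n:ℝ)-l) * (u (r/2) ^ γ * r ^ ((n:ℝ)-l)))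
            = r ^ ((n:ℝ)-K) * ((K/C) * (2:ℝ)⁻¹ ^ ((n:ℝ)-l) * (u (r/2) ^ γ * r ^ (K-l))) := by
          rw [hsplit]; ring
        rw [← he2, ← he]
        exact hEl
      exact (mul_le_mul_iff_right₀ hrNK).mp h1
    have hnn : (0:ℝ) ≤ (K/C) * (2:ℝ)⁻¹ ^ ((n:ℝ)-l) * (u (r/2) ^ γ * r ^ (K-l)) := by positivity
    have hroot := root_helper2 (k'+1) (Nat.succ_ne_zero k') (hv_nonneg r hr0) hnn hstep
    rw [hKcast] at hroot
    have hexp : ((K/C) * (2:ℝ)⁻¹ ^ ((n:ℝ)-l) * (u (r/2) ^ γ * r ^ (K-l))) ^ (K⁻¹:ℝ)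
        = ((K/C) * (2:ℝ)⁻¹ ^ ((n:ℝ)-l)) ^ (K⁻¹:ℝ) * (r ^ ((K-l)/K) * u (r/2) ^ (γ/K)) := by
      rw [Real.mul_rpow (by positivity) (by positivity),
        Real.mul_rpow (Real.rpow_nonneg hu20.le γ) (Real.rpow_nonneg hr0.le _),
        ← Real.rpow_mul hu20.le, ← Real.rpow_mul hr0.le,
        show γ * K⁻¹ = γ/K from (div_eq_mul_inv γ K).symm,
        show (K-l) * K⁻¹ = (K-l)/K from (div_eq_mul_inv _ K).symm]
      ring
    rw [hexp] at hroot
    exact hroot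
  -- integrate the upper differential inequality
  obtain ⟨C₂, hC₂, hu_upper⟩ :
      ∃ C₂ : ℝ, 0 < C₂ ∧ ∀ r : ℝ, R₂ ≤ r → u r ≤ C₂ * r ^ ((2*K - l)/(K - γ)) := by
    set δ : ℝ := (K - γ)/K with hδ_def
    have hδ0 : 0 < δ := div_pos (by linarith) hKpos
    have hδne : δ ≠ 0 := ne_of_gt hδ0
    have hKγ : K - γ ≠ 0 := ne_of_gt (by linarith)
    set W : ℝ → ℝ := fun r => u r ^ δ with hW_def
    have hW' : ∀ r : ℝ, 0 < r → HasDerivAt W (v r * δ * u r ^ (δ-1)) r := by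
      intro r hr
      exact (hu_diff r hr).1.hasDerivAt.rpow_const (Or.inl (hu_pos r hr.le).ne')
    have hR₂0 : 0 < R₂ := lt_of_lt_of_le hr₁0 hR₂r₁
    have hKl0 : (0:ℝ) ≤ (K-l)/K := div_nonneg (by linarith) hKpos.le
    have hW_bound : ∀ r : ℝ, R₂ ≤ r → W r ≤ W R₂ + δ * A * r ^ ((2*K-l)/K) := by
      intro r hr
      have hr0 : 0 < r := lt_of_lt_of_le hR₂0 hr
      have hint : IntervalIntegrable (fun s => v s * δ * u s ^ (δ-1)) volume R₂ r := by
        apply ContinuousOn.intervalIntegrable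
        rw [Set.uIcc_of_le hr]
        have hpos : ∀ x ∈ Set.Icc R₂ r, 0 < x := fun x hx => lt_of_lt_of_le hR₂0 hx.1
        have h1 : ContinuousOn (fun s => u s ^ (δ-1)) (Set.Icc R₂ r) :=
          (hu_contOn R₂ r hR₂0).rpow_const (fun x hx => Or.inl (hu_pos x (hpos x hx).le).ne')
        exact ((hu_cont'.mono (fun x hx => (hpos x hx).le)).mul continuousOn_const).mul h1
      have hftc : W r - W R₂ = ∫ s in R₂..r, v s * δ * u s ^ (δ-1) := by
        refine (intervalIntegral.integral_eq_sub_of_hasDerivAt ?_ hint).symm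
        intro x hx
        rw [Set.uIcc_of_le hr] at hx
        exact hW' x (lt_of_lt_of_le hR₂0 hx.1)
      have hmono : ∫ s in R₂..r, v s * δ * u s ^ (δ-1) ≤ ∫ s in R₂..r, δ * A * r ^ ((K-l)/K) := by
        apply intervalIntegral.integral_mono_on hr hint intervalIntegrable_const
        intro s hs
        have hs0 : 0 < s := lt_of_lt_of_le hR₂0 hs.1
        have hus : 0 < u s := hu_pos s hs0.le
        have hvs := hv_upper s hs.1
        have hcancel : u s ^ (δ-1) * u s ^ (γ/K) = 1 := by
          rw [← Real.rpow_add hus, show δ - 1 + γ/K = 0 by rw [hδ_def]; field_simp; ring,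
            Real.rpow_zero]
        have hud : (0:ℝ) ≤ u s ^ (δ-1) := Real.rpow_nonneg hus.le _
        calc v s * δ * u s ^ (δ-1)
            ≤ (A * (s ^ ((K-l)/K) * u s ^ (γ/K))) * δ * u s ^ (δ-1) := by
              apply mul_le_mul_of_nonneg_right (mul_le_mul_of_nonneg_right hvs hδ0.le) hud
          _ = δ * A * s ^ ((K-l)/K) * (u s ^ (δ-1) * u s ^ (γ/K)) := by ring
          _ = δ * A * s ^ ((K-l)/K) := by rw [hcancel, mul_one]
          _ ≤ δ * A * r ^ ((K-l)/K) := by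
              exact mul_le_mul_of_nonneg_left (Real.rpow_le_rpow hs0.le hs.2 hKl0)
                (by positivity)
      rw [intervalIntegral.integral_const, smul_eq_mul] at hmono
      have h2 : (r - R₂) * (δ * A * r ^ ((K-l)/K)) ≤ δ * A * r ^ ((2*K-l)/K) := by
        have hr' : r - R₂ ≤ r := by linarith
        have hsplit : r ^ ((2*K-l)/K) = r * r ^ ((K-l)/K) := by
          rw [show (2*K-l)/K = 1 + (K-l)/K by field_simp [hKpos.ne']; ring,
            Real.rpow_add hr0, Real.rpow_one]
        rw [hsplit]
        calc (r - R₂) * (δ * A * r ^ ((K-l)/K)) ≤ r * (δ * A * r ^ ((K-l)/K)) :=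
              mul_le_mul_of_nonneg_right hr' (by positivity)
          _ = δ * A * (r * r ^ ((K-l)/K)) := by ring
      linarith
    have hWR₂pos : 0 < W R₂ := Real.rpow_pos_of_pos (hu_pos R₂ hR₂0.le) δ
    refine ⟨(W R₂ + δ*A) ^ (δ⁻¹:ℝ), by positivity, ?_⟩
    intro r hr
    have hr0 : 0 < r := lt_of_lt_of_le hR₂0 hr
    have hr1 : (1:ℝ) ≤ r := le_trans hR₂1 hr
    have h2Kl : (0:ℝ) ≤ (2*K-l)/K := div_nonneg (by linarith) hKpos.le
    have hge1 : (1:ℝ) ≤ r ^ ((2*K-l)/K) := Real.one_le_rpow hr1 h2Kl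
    have hWb : W r ≤ (W R₂ + δ*A) * r ^ ((2*K-l)/K) := by
      have h3 := hW_bound r hr
      nlinarith [hWR₂pos, (by positivity : (0:ℝ) < δ*A)]
    have hu_eq : u r = (W r) ^ (δ⁻¹:ℝ) := by
      rw [hW_def]
      exact (Real.rpow_rpow_inv (hu_pos r hr0.le).le hδne).symm
    rw [hu_eq]
    have hWr0 : (0:ℝ) ≤ W r := Real.rpow_nonneg (hu_pos r hr0.le).le δ
    calc (W r) ^ (δ⁻¹:ℝ) ≤ ((W R₂ + δ*A) * r ^ ((2*K-l)/K)) ^ (δ⁻¹:ℝ) :=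
          Real.rpow_le_rpow hWr0 hWb (by positivity)
      _ = (W R₂ + δ*A) ^ (δ⁻¹:ℝ) * r ^ ((2*K-l)/(K-γ)) := by
          rw [Real.mul_rpow (by positivity) (Real.rpow_nonneg hr0.le _),
            ← Real.rpow_mul hr0.le]
          congr 1
          rw [hδ_def]
          field_simp
  -- the doubling lower inequality
  set θ : ℝ := γ / K with hθ_def
  have hθ0 : 0 < θ := by positivity
  have hθ1 : θ < 1 := by rw [hθ_def, div_lt_one hKpos]; linarith
  set α : ℝ := (2*K - l)/(K - γ) with hα_def
  have hα0 : 0 < α := by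
    apply div_pos (by linarith) (by linarith)
  obtain ⟨c₀, hc₀, hrec⟩ :
      ∃ c₀ : ℝ, 0 < c₀ ∧ ∀ r : ℝ, 4*(4*r₁) ≤ r →
        c₀ * (u (r/4) * (r/4) ^ (-α)) ^ θ ≤ u r * r ^ (-α) := by
    set μ : ℝ := (2*K-l)/K with hμ_def
    have hKγne : K - γ ≠ 0 := ne_of_gt (by linarith)
    have hμα : μ - α = -(α*θ) := by
      rw [hμ_def, hα_def, hθ_def]
      field_simp
      ring
    refine ⟨A₂ * (2:ℝ)^(-μ) * (4:ℝ)^(-(α*θ)), by positivity, ?_⟩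
    intro r hrr
    have hr0 : 0 < r := by linarith
    have hr20 : 0 < r/2 := by linarith
    have hr40 : 0 < r/4 := by linarith
    have hu4 : 0 < u (r/4) := hu_pos _ hr40.le
    have hint : IntervalIntegrable v volume (r/2) r := by
      apply ContinuousOn.intervalIntegrable
      rw [Set.uIcc_of_le (by linarith)]
      exact hu_cont'.mono (fun x hx => le_trans hr20.le hx.1)
    have hftc : u r - u (r/2) = ∫ s in (r/2)..r, v s := by
      refine (intervalIntegral.integral_eq_sub_of_hasDerivAt ?_ hint).symm
      intro x hx
      rw [Set.uIcc_of_le (by linarith)] at hx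
      exact (hu_diff x (lt_of_lt_of_le hr20 hx.1)).1.hasDerivAt
    have hKl0' : (0:ℝ) ≤ (K-l)/K := div_nonneg (by linarith) hKpos.le
    have hθK : (0:ℝ) ≤ γ/K := by positivity
    have hmono : ∫ s in (r/2)..r, A₂ * ((r/2) ^ ((K-l)/K) * u (r/4) ^ (γ/K))
        ≤ ∫ s in (r/2)..r, v s := by
      apply intervalIntegral.integral_mono_on (by linarith) intervalIntegrable_const hint
      intro s hs
      have hs0 : 0 < s := lt_of_lt_of_le hr20 hs.1
      have hs2r₁ : 2*r₁ ≤ s := by linarith [hs.1]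
      have hvs := hv_lower s hs2r₁
      have h1 : (r/2) ^ ((K-l)/K) ≤ s ^ ((K-l)/K) := Real.rpow_le_rpow hr20.le hs.1 hKl0'
      have h2 : u (r/4) ^ (γ/K) ≤ u (s/2) ^ (γ/K) :=
        Real.rpow_le_rpow hu4.le
          (hu_mono (Set.mem_Ici.mpr hr40.le) (Set.mem_Ici.mpr (by linarith : (0:ℝ) ≤ s/2))
            (by linarith [hs.1])) hθK
      calc A₂ * ((r/2) ^ ((K-l)/K) * u (r/4) ^ (γ/K))
          ≤ A₂ * (s ^ ((K-l)/K) * u (s/2) ^ (γ/K)) := by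
            apply mul_le_mul_of_nonneg_left _ hA₂.le
            exact mul_le_mul h1 h2 (Real.rpow_nonneg hu4.le _) (Real.rpow_nonneg hs0.le _)
        _ ≤ v s := hvs
    rw [intervalIntegral.integral_const, smul_eq_mul] at hmono
    have hu2 : (0:ℝ) ≤ u (r/2) := (hu_pos (r/2) hr20.le).le
    have hkey : A₂ * ((r/2) ^ μ * u (r/4) ^ θ) ≤ u r := by
      have hsplit : (r/2) ^ μ = (r/2) * (r/2) ^ ((K-l)/K) := by
        rw [hμ_def, show (2*K-l)/K = 1 + (K-l)/K by field_simp [hKpos.ne']; ring,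
          Real.rpow_add hr20, Real.rpow_one]
      have hq : (r - r/2) * (A₂ * ((r/2) ^ ((K-l)/K) * u (r/4) ^ (γ/K))) ≤ u r := by
        linarith
      rw [hsplit, hθ_def]
      calc A₂ * ((r/2 * (r/2) ^ ((K-l)/K)) * u (r/4) ^ (γ/K))
          = (r - r/2) * (A₂ * ((r/2) ^ ((K-l)/K) * u (r/4) ^ (γ/K))) := by ring
        _ ≤ u r := hq
    have h4pos : (0:ℝ) < (4:ℝ) ^ (μ - α) := Real.rpow_pos_of_pos (by norm_num) _
    have hL : (A₂ * (2:ℝ)^(-μ) * (4:ℝ)^(-(α*θ))) * (u (r/4) * (r/4) ^ (-α)) ^ θ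
        = A₂ * ((2:ℝ)^(-μ) * (r ^ (μ - α) * u (r/4) ^ θ)) := by
      rw [Real.mul_rpow hu4.le (Real.rpow_nonneg (by positivity) _),
        ← Real.rpow_mul (by positivity : (0:ℝ) ≤ r/4),
        Real.div_rpow hr0.le (by norm_num : (0:ℝ) ≤ 4),
        show -α*θ = -(α*θ) by ring, ← hμα]
      field_simp
    have hhalf : (r/2) ^ μ = (2:ℝ)^(-μ) * r ^ μ := by
      rw [Real.div_rpow hr0.le (by norm_num : (0:ℝ) ≤ 2),
        Real.rpow_neg (by norm_num : (0:ℝ) ≤ 2)]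
      ring
    have hmul := mul_le_mul_of_nonneg_right hkey (Real.rpow_nonneg hr0.le (-α))
    have heq : A₂ * ((r/2)^μ * u (r/4)^θ) * r^(-α)
        = A₂ * ((2:ℝ)^(-μ) * (r^(μ-α) * u (r/4)^θ)) := by
      rw [hhalf, show (μ:ℝ) - α = μ + (-α) by ring, Real.rpow_add hr0]
      ring
    rw [heq] at hmul
    rw [hL]
    exact hmul
  -- iterate
  have hbase : ∀ r : ℝ, 4*r₁ ≤ r → r ≤ 4*(4*r₁) → u (4*r₁) * (16*r₁) ^ (-α) ≤ u r * r ^ (-α) := by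
    intro r h1 h2
    have h40 : (0:ℝ) < 4*r₁ := by positivity
    have hr0 : 0 < r := lt_of_lt_of_le h40 h1
    have hu1 : u (4*r₁) ≤ u r :=
      hu_mono (Set.mem_Ici.mpr h40.le) (Set.mem_Ici.mpr hr0.le) h1
    have hp : (16*r₁) ^ (-α) ≤ r ^ (-α) :=
      Real.rpow_le_rpow_of_nonpos hr0 (by linarith) (by linarith)
    exact mul_le_mul hu1 hp (Real.rpow_nonneg (by positivity) _) (hu_pos r hr0.le).le
  obtain ⟨C₁, hC₁, hu_lower⟩ := iter_helper (fun r => u r * r ^ (-α)) (4*r₁) c₀ θ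
    (u (4*r₁) * (16*r₁) ^ (-α)) (by positivity)
    hc₀ hθ0 hθ1 (by have := hu_pos (4*r₁) (by positivity); positivity) hbase hrec
  refine ⟨C₁, max C₁ C₂, max R₂ (4*r₁), hC₁, le_max_left _ _, lt_of_lt_of_le (by positivity : (0:ℝ) < 4*r₁) (le_max_right _ _), ?_⟩
  intro r hr
  have hrR₂ : R₂ ≤ r := le_trans (le_max_left _ _) hr
  have hr4 : 4*r₁ ≤ r := le_trans (le_max_right _ _) hr
  have hr0 : 0 < r := lt_of_lt_of_le (by positivity) hr4
  have hαK : (2 * ((k'+1:ℕ):ℝ) - l) / (((k'+1:ℕ):ℝ) - γ) = α := by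
    rw [hα_def, hKcast]
  rw [hαK]
  constructor
  · have h := hu_lower r hr4
    have : C₁ * r ^ α ≤ (u r * r ^ (-α)) * r ^ α :=
      mul_le_mul_of_nonneg_right h (Real.rpow_nonneg hr0.le α)
    calc C₁ * r ^ α ≤ (u r * r ^ (-α)) * r ^ α := this
      _ = u r := by
          rw [mul_assoc, ← Real.rpow_add hr0]
          simp
  · calc u r ≤ C₂ * r ^ ((2*K - l)/(K - γ)) := hu_upper r hrR₂
      _ ≤ max C₁ C₂ * r ^ α := by
          rw [hα_def]
          exact mul_le_mul_of_nonneg_right (le_max_right _ _) (Real.rpow_nonneg hr0.le _)
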